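/- arXiv:2204.04924 — 3 statements merged into one kernel-verified Lean document; each statement's English description precedes it below -/
import Mathlib

section
/- Let A be a generalised Cartan matrix with a free realisation (X^∨, X, Δ^∨, Δ) over ℤ (i.e. the simple roots {α_s} are ℤ-linearly independent). Then the representation of W on X given by r_s(λ) = λ − ⟨α_s^∨, λ⟩α_s is faithful: if w ∈ W acts as the identity on X, then w = 1. -/
/-- A generalised Cartan matrix over `ℤ`: `a s s = 2`, `a s t ≤ 0` off the diagonal, and
`a s t = 0 ↔ a t s = 0`. -/
structure GCM (S : Type*) where
  a : S → S → ℤ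
  diagonal : ∀ s, a s s = 2
  off_diagonal_nonpos : ∀ s t, s ≠ t → a s t ≤ 0
  zero_iff : ∀ s t, a s t = 0 → a t s = 0

/-- The entries of the Coxeter matrix associated to a generalised Cartan matrix:
`m s t = 2, 3, 4, 6, ∞` (encoded `0`) according as `a s t * a t s = 0, 1, 2, 3, ≥ 4`. -/
def GCM.m {S : Type*} [DecidableEq S] (A : GCM S) (s t : S) : ℕ :=
  if s = t then 1
  else if A.a s t * A.a t s = 0 then 2
  else if A.a s t * A.a t s = 1 then 3
  else if A.a s t * A.a t s = 2 then 4
  else if A.a s t * A.a t s = 3 then 6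
  else 0


/-!
Call `x ∈ X` positive if it is an `ℕ`-combination of simple roots. The heart of the matter is that
`w α_i` is positive whenever `ℓ(w s_i) > ℓ(w)`. Granting this, if `w ≠ 1` acts trivially, take a
right descent `i` of `w`: then `w s_i` does not have `i` as a descent, yet
`(w s_i) α_i = w (-α_i) = -α_i`, which is not positive because the simple roots are linearly
independent.

Positivity is proved by induction on `ℓ(w)` (Humphreys, §5.4). Pick a right descent `i' ≠ i` of
`w` and factor `w = v u` with `u` in the rank-two parabolic subgroup `⟨s_i, s_{i'}⟩`, lengths
adding, and `v` without right descents in `{i, i'}`. A reduced word for `u` alternates, ends in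
`s_{i'}` and is shorter than `m_{i i'}`; an explicit rank-two computation then shows
`u α_i ∈ ℕ α_i + ℕ α_{i'}`, and `v` maps both `α_i` and `α_{i'}` to positive vectors by induction.
-/

namespace CoxeterSystem

variable {S W : Type*} [Group W] {M : CoxeterMatrix S} (cs : CoxeterSystem M W)

local prefix:100 "s " => cs.simple
local prefix:100 "π " => cs.wordProd
local prefix:100 "ℓ " => cs.length

theorem isRightDescent_of_isReduced_append_singleton {ω : List S} {i : S}
    (h : cs.IsReduced (ω ++ [i])) : cs.IsRightDescent (π (ω ++ [i])) i := by
  rw [IsRightDescent, h.eq, wordProd_append, wordProd_singleton, simple_mul_simple_cancel_right]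
  simpa using Nat.lt_succ_of_le (cs.length_wordProd_le ω)

theorem eq_alternatingWord_of_isReduced {i i' : S} {ω : List S}
    (hω : ∀ x ∈ ω, x = i ∨ x = i') (hred : cs.IsReduced ω) (hi : ¬ cs.IsRightDescent (π ω) i) :
    ω = alternatingWord i i' ω.length := by
  induction ω using List.reverseRecOn generalizing i i' with
  | nil => rfl
  | append_singleton ω x ih =>
    obtain rfl : x = i' := by
      rcases hω x (by simp) with rfl | rfl
      · exact absurd (cs.isRightDescent_of_isReduced_append_singleton hred) hi
      · rfl
    have hx : ¬ cs.IsRightDescent (π ω) x := fun hdesc => by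
      have hlen := hred.eq
      rw [wordProd_append, wordProd_singleton, List.length_append, List.length_singleton] at hlen
      have := cs.length_wordProd_le ω
      rw [IsRightDescent] at hdesc
      omega
    have hred' : cs.IsReduced ω := by simpa using hred.take ω.length
    rw [ih (fun y hy => (hω y (by simp [hy])).symm) hred' hx, List.length_append,
      List.length_singleton, length_alternatingWord, alternatingWord_succ, List.concat_eq_append]

theorem length_lt_of_isReduced_alternatingWord {i i' : S} {n : ℕ} (hM : M i i' ≠ 0)
    (hred : cs.IsReduced (alternatingWord i i' n))
    (hi : ¬ cs.IsRightDescent (π (alternatingWord i i' n)) i) : n < M i i' := by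
  obtain hlt | rfl := (not_lt.mp fun h => cs.not_isReduced_alternatingWord i i' hM h hred).lt_or_eq
  · exact hlt
  · have hbraid : π (alternatingWord i i' (M i i')) = π (alternatingWord i' i (M i i')) := by
      have := cs.wordProd_braidWord_eq i i'
      rwa [braidWord, braidWord, M.symmetric i' i] at this
    have hred' : cs.IsReduced (alternatingWord i' i (M i i')) := by
      rw [IsReduced, ← hbraid, hred.eq, length_alternatingWord, length_alternatingWord]
    obtain ⟨k, hk⟩ := Nat.exists_eq_add_one_of_ne_zero hM
    rw [hbraid, hk, alternatingWord_succ, List.concat_eq_append] at hi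
    rw [hk, alternatingWord_succ, List.concat_eq_append] at hred'
    exact absurd (cs.isRightDescent_of_isReduced_append_singleton hred') hi

theorem exists_factorization_not_isRightDescent (T : Set S) (v : W) (σ : List S)
    (hσ : ∀ x ∈ σ, x ∈ T) (hlen : ℓ (v * π σ) = ℓ v + σ.length) :
    ∃ (v' : W) (τ : List S), (∀ x ∈ τ, x ∈ T) ∧ v' * π τ = v * π σ ∧
      ℓ (v * π σ) = ℓ v' + τ.length ∧ σ.length ≤ τ.length ∧
      ∀ t ∈ T, ¬ cs.IsRightDescent v' t := by
  induction hv : ℓ v using Nat.strong_induction_on generalizing v σ with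
  | _ k ih =>
  by_cases hdesc : ∃ t ∈ T, cs.IsRightDescent v t
  · obtain ⟨t, ht, hvt⟩ := hdesc
    have hvt' := cs.isRightDescent_iff.mp hvt
    have hprod : v * s t * π (t :: σ) = v * π σ := by
      rw [wordProd_cons, mul_assoc, simple_mul_simple_cancel_left]
    obtain ⟨v', τ, hτ, hprod', hlen', hστ, hnd⟩ := ih _ (by omega) (v * s t) (t :: σ)
      (by simpa [ht] using hσ) (by rw [hprod, List.length_cons]; omega) rfl
    rw [hprod] at hprod' hlen'
    rw [List.length_cons] at hστ
    exact ⟨v', τ, hτ, hprod', hlen', by omega, hnd⟩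
  · push Not at hdesc
    exact ⟨v, σ, hσ, rfl, hlen, le_rfl, hdesc⟩

end CoxeterSystem

theorem LinearIndependent.neg_notMem_closure_range {ι R X : Type*} [Ring R] [PartialOrder R]
    [IsStrictOrderedRing R] [AddCommGroup X] [Module R X] {α : ι → X}
    (hα : LinearIndependent R α) (i : ι) : -α i ∉ AddSubmonoid.closure (Set.range α) := by
  classical
  intro h
  obtain ⟨a, ha⟩ := AddSubmonoid.mem_closure_range_iff.mp h
  have hzero : Finsupp.linearCombination R α (a.mapRange Nat.cast Nat.cast_zero +
      Finsupp.single i 1) = 0 := by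
    rw [map_add, Finsupp.linearCombination_single, one_smul, Finsupp.linearCombination_apply,
      Finsupp.sum_mapRange_index fun j => zero_smul R (α j)]
    simp only [Nat.cast_smul_eq_nsmul]
    rw [← ha, neg_add_cancel]
  have hi := DFunLike.congr_fun (linearIndependent_iff.mp hα _ hzero) i
  simp only [Finsupp.add_apply, Finsupp.mapRange_apply, Finsupp.single_eq_same,
    Finsupp.coe_zero, Pi.zero_apply] at hi
  exact (Nat.cast_add_one_pos (a i)).ne' hi

/-- With `a = ⟨α_i^∨, α_{i'}⟩`, `b = ⟨α_{i'}^∨, α_i⟩` and `(x, z) = rankTwoCoeff (a * b) n`, the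
alternating word of length `n` ending in `s_{i'}` sends `α_i` to `x α_i - b z α_{i'}`: scaling the
second coordinate by `-b` makes the recurrence depend on `a b` alone. -/
def rankTwoCoeff (P : ℤ) : ℕ → ℤ × ℤ
  | 0 => (1, 0)
  | n + 1 =>
    let c := rankTwoCoeff P n
    if Even n then (c.1, c.1 - c.2) else (P * c.2 - c.1, c.2)

theorem rankTwoCoeff_nonneg_of_four_le {P : ℤ} (hP : 4 ≤ P) (n : ℕ) :
    0 ≤ (rankTwoCoeff P n).1 ∧ 0 ≤ (rankTwoCoeff P n).2 ∧
      if Even n then 2 * (rankTwoCoeff P n).2 ≤ (rankTwoCoeff P n).1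
      else (rankTwoCoeff P n).1 ≤ 2 * (rankTwoCoeff P n).2 := by
  induction n with
  | zero => simp [rankTwoCoeff]
  | succ n ih =>
    by_cases hn : Even n <;>
      simp only [rankTwoCoeff, hn, Nat.even_add_one, not_true_eq_false, not_false_eq_true,
        ↓reduceIte] at ih ⊢
    · omega
    · obtain ⟨_, hz, _⟩ := ih
      have := mul_le_mul_of_nonneg_right hP hz
      omega

theorem GCM.rankTwoCoeff_nonneg {S : Type*} [DecidableEq S] (A : GCM S) {i j : S} (hij : i ≠ j)
    {n : ℕ} (hn : A.m i j ≠ 0 → n < A.m i j) :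
    0 ≤ (rankTwoCoeff (A.a i j * A.a j i) n).1 ∧
      0 ≤ (rankTwoCoeff (A.a i j * A.a j i) n).2 := by
  have hP : 0 ≤ A.a i j * A.a j i :=
    mul_nonneg_of_nonpos_of_nonpos (A.off_diagonal_nonpos i j hij)
      (A.off_diagonal_nonpos j i hij.symm)
  rw [GCM.m, if_neg hij] at hn
  generalize A.a i j * A.a j i = P at hP hn
  -- for `P < 4`, `hn` bounds `n` by `m_{ij} ∈ {2, 3, 4, 6}`, leaving finitely many cases
  split_ifs at hn
  all_goals first
    | exact (rankTwoCoeff_nonneg_of_four_le (by omega) n).imp_right And.left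
    | subst P; have := hn (by decide); interval_cases n <;> decide

open CoxeterSystem

section Reflection

variable {S W X : Type*} [Group W] {M : CoxeterMatrix S} (cs : CoxeterSystem M W)
  [AddCommGroup X] [Module ℤ X]

local prefix:100 "π " => cs.wordProd
local prefix:100 "ℓ " => cs.length

theorem apply_wordProd_alternatingWord {A : GCM S} {α : S → X} {αv : S → Module.Dual ℤ X}
    {ρ : W →* Module.End ℤ X} (hpairing : ∀ s t, αv s (α t) = A.a s t)
    (hρ : ∀ s x, ρ (cs.simple s) x = x - αv s x • α s) (i i' : S) (n : ℕ) :
    ρ (π (alternatingWord i i' n)) (α i) =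
      (rankTwoCoeff (A.a i i' * A.a i' i) n).1 • α i +
        ((rankTwoCoeff (A.a i i' * A.a i' i) n).2 * -A.a i' i) • α i' := by
  induction n with
  | zero => simp [rankTwoCoeff, alternatingWord]
  | succ n ih =>
    rw [alternatingWord_succ', wordProd_cons, map_mul, Module.End.mul_apply, ih]
    by_cases hn : Even n <;>
      simp only [rankTwoCoeff, hn, ↓reduceIte, hρ, map_add, map_zsmul, hpairing, A.diagonal,
        smul_eq_mul] <;>
      -- `•` elaborated to `zsmul`, but `module` works with the `Module ℤ X` action
      simp only [← Int.cast_smul_eq_zsmul ℤ, Int.cast_id] <;>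
      module

theorem apply_simpleRoot_mem_closure_pair [DecidableEq S] {A : GCM S}
    (hM : ∀ s t, M s t = A.m s t) {α : S → X} {αv : S → Module.Dual ℤ X}
    {ρ : W →* Module.End ℤ X} (hpairing : ∀ s t, αv s (α t) = A.a s t)
    (hρ : ∀ s x, ρ (cs.simple s) x = x - αv s x • α s)
    {i i' : S} (hii' : i ≠ i') {σ : List S} (hσ : ∀ x ∈ σ, x = i ∨ x = i')
    (hred : cs.IsReduced σ) (hi : ¬ cs.IsRightDescent (π σ) i) :
    ρ (π σ) (α i) ∈ AddSubmonoid.closure {α i, α i'} := by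
  have halt := cs.eq_alternatingWord_of_isReduced hσ hred hi
  have hn : A.m i i' ≠ 0 → σ.length < A.m i i' := by
    rw [← hM]
    intro hM0
    rw [halt] at hred hi
    exact cs.length_lt_of_isReduced_alternatingWord hM0 hred hi
  obtain ⟨hc₁, hc₂⟩ := A.rankTwoCoeff_nonneg hii' hn
  have hb : 0 ≤ -A.a i' i := neg_nonneg.mpr (A.off_diagonal_nonpos i' i hii'.symm)
  rw [halt, apply_wordProd_alternatingWord cs hpairing hρ, AddSubmonoid.mem_closure_pair]
  obtain ⟨m, hm⟩ := Int.eq_ofNat_of_zero_le hc₁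
  obtain ⟨m', hm'⟩ := Int.eq_ofNat_of_zero_le (mul_nonneg hc₂ hb)
  exact ⟨m, m', by rw [hm, hm', natCast_zsmul, natCast_zsmul]⟩

theorem apply_simpleRoot_mem_closure_range [DecidableEq S] {A : GCM S}
    (hM : ∀ s t, M s t = A.m s t) {α : S → X} {αv : S → Module.Dual ℤ X}
    {ρ : W →* Module.End ℤ X} (hpairing : ∀ s t, αv s (α t) = A.a s t)
    (hρ : ∀ s x, ρ (cs.simple s) x = x - αv s x • α s) (w : W) (i : S)
    (hi : ¬ cs.IsRightDescent w i) : ρ w (α i) ∈ AddSubmonoid.closure (Set.range α) := by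
  induction hw : ℓ w using Nat.strong_induction_on generalizing w i with
  | _ k ih =>
  obtain rfl | hw1 := eq_or_ne w 1
  · simpa using AddSubmonoid.subset_closure (Set.mem_range_self i)
  obtain ⟨i', hi'⟩ := cs.exists_rightDescent_of_ne_one hw1
  have hii' : i ≠ i' := by rintro rfl; exact hi hi'
  have hw' : w * cs.simple i' * π [i'] = w := by
    rw [wordProd_singleton, mul_assoc, simple_mul_simple_self, mul_one]
  obtain ⟨v, τ, hτ, hvτ, hlen, hτ1, hv⟩ :=
    cs.exists_factorization_not_isRightDescent {i, i'} (w * cs.simple i') [i'] (by simp)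
      (by rw [hw', List.length_singleton, cs.isRightDescent_iff.mp hi'])
  rw [hw'] at hvτ hlen
  rw [List.length_singleton] at hτ1
  have hred : cs.IsReduced τ := by
    have h1 := cs.length_mul_le v (π τ)
    have h2 := cs.length_wordProd_le τ
    rw [hvτ] at h1
    rw [CoxeterSystem.IsReduced]
    omega
  have hτi : ¬ cs.IsRightDescent (π τ) i := by
    intro hd
    have h1 := cs.length_mul_le v (π τ * cs.simple i)
    rw [← mul_assoc, hvτ, cs.not_isRightDescent_iff.mp hi] at h1
    rw [IsRightDescent, hred.eq] at hd
    omega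
  have hv_pos : AddSubmonoid.closure {α i, α i'} ≤
      (AddSubmonoid.closure (Set.range α)).comap (ρ v).toAddMonoidHom := by
    rw [AddSubmonoid.closure_le, Set.pair_subset_iff]
    exact ⟨ih _ (by omega) v i (hv i (by simp)) rfl, ih _ (by omega) v i' (hv i' (by simp)) rfl⟩
  rw [← hvτ, map_mul, Module.End.mul_apply]
  exact hv_pos <|
    apply_simpleRoot_mem_closure_pair cs hM hpairing hρ hii' (by simpa using hτ) hred hτi

end Reflection

theorem free_realisation_faithful_general
    {S : Type*} [DecidableEq S] (A : GCM S)
    {W : Type*} [Group W] {M : CoxeterMatrix S}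
    (cs : CoxeterSystem M W) (hM : ∀ s t, M s t = A.m s t)
    {X Xd : Type*}
    [AddCommGroup X] [Module ℤ X]
    [AddCommGroup Xd] [Module ℤ Xd]
    (pair : Xd →ₗ[ℤ] X →ₗ[ℤ] ℤ)
    (α : S → X) (coroot : S → Xd)
    (hpairing : ∀ s t, pair (coroot s) (α t) = A.a s t)
    (hfree : LinearIndependent ℤ α)
    (ρ : W →* Module.End ℤ X)
    (hρ : ∀ (s : S) (x : X), ρ (cs.simple s) x = x - pair (coroot s) x • α s) :
    ∀ w : W, (∀ x : X, ρ w x = x) → w = 1 := by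
  intro w hw
  by_contra hw1
  obtain ⟨i, hi⟩ := cs.exists_rightDescent_of_ne_one hw1
  have hpos := apply_simpleRoot_mem_closure_range cs hM (αv := fun s => pair (coroot s))
    hpairing hρ (w * cs.simple i) i (cs.isRightDescent_iff_not_isRightDescent_mul.mp hi)
  have hreflect : ρ (cs.simple i) (α i) = -α i := by
    rw [hρ, hpairing, A.diagonal, two_zsmul, sub_add_cancel_left]
  rw [map_mul, Module.End.mul_apply, hreflect, map_neg, hw] at hpos
  exact hfree.neg_notMem_closure_range i hpos

/-- **Faithfulness for free realisations (STATEMENT 6).**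
Let `A` be a generalised Cartan matrix with a free realisation `(X^∨, X, Δ^∨, Δ)` over `ℤ`
(i.e. the simple roots are `ℤ`-linearly independent).  Then the representation of `W` on `X`
given by `r_s(λ) = λ − ⟨α_s^∨, λ⟩ α_s` is faithful: if `w ∈ W` acts as the identity on `X`,
then `w = 1`. -/
theorem free_realisation_faithful
    {S : Type*} [DecidableEq S] [Fintype S] (A : GCM S)
    {W : Type*} [Group W] {M : CoxeterMatrix S}
    (cs : CoxeterSystem M W) (hM : ∀ s t, M s t = A.m s t)
    {X Xd : Type*}
    [AddCommGroup X] [Module ℤ X] [Module.Free ℤ X] [Module.Finite ℤ X]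
    [AddCommGroup Xd] [Module ℤ Xd] [Module.Free ℤ Xd] [Module.Finite ℤ Xd]
    (pair : Xd →ₗ[ℤ] X →ₗ[ℤ] ℤ)
    (hperf : Function.Bijective pair ∧ Function.Bijective pair.flip)
    (α : S → X) (coroot : S → Xd)
    (hpairing : ∀ s t, pair (coroot s) (α t) = A.a s t)
    (hfree : LinearIndependent ℤ α)
    (ρ : W →* Module.End ℤ X)
    (hρ : ∀ (s : S) (x : X), ρ (cs.simple s) x = x - pair (coroot s) x • α s) :
    ∀ w : W, (∀ x : X, ρ w x = x) → w = 1 :=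
  free_realisation_faithful_general A cs hM pair α coroot hpairing hfree ρ hρ
end

section
/- Let A be a generalised Cartan matrix with a realisation over ℤ whose simple roots are positively independent, i.e. whenever Σ_{s∈S} λ_s α_s = 0 with all λ_s ∈ ℤ_{≥0}, then all λ_s = 0. Then the set of roots is partitioned into positive and negative roots: Φ = Φ⁺ ⊔ (−Φ⁺), where Φ⁺ = Φ ∩ Σ_{s∈S} ℤ_{≥0}α_s. -/
/-- The set of roots `Φ = {w(α_s) : w ∈ W, s ∈ S}`. -/
def rootSet {S W X : Type*} [Group W] [AddCommGroup X] [Module ℤ X]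
    (ρ : W →* Module.End ℤ X) (α : S → X) : Set X :=
  {β | ∃ (w : W) (s : S), β = ρ w (α s)}

/-- The set of positive roots `Φ⁺ = Φ ∩ Σ_{s ∈ S} ℤ≥0 • α_s`. -/
def posRootSet {S W X : Type*} [Fintype S] [Group W] [AddCommGroup X] [Module ℤ X]
    (ρ : W →* Module.End ℤ X) (α : S → X) : Set X :=
  rootSet ρ α ∩ {β | ∃ c : S → ℕ, β = ∑ s, (c s : ℤ) • α s}

/-!
Every root is `w(α_i)`. If `ℓ(w s_i) > ℓ(w)` and `w ≠ 1`, pick a right descent `s_j` of `w` and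
write `w = u v` with `v` an alternating word in `s_i, s_j` ending in `s_j`, `ℓ(w) = ℓ(u) + ℓ(v)`,
and `s_i, s_j` not right descents of `u`. Then `v s_i` is still reduced, so `v` is shorter than
`m_ij`, and a rank-two computation shows `v(α_i) = a α_i + b α_j` with `a, b ≥ 0` (for
`m_ij < ∞` by inspection of the finitely many cases, for `m_ij = ∞` by a growth estimate). By
induction on the length, `u(α_i)` and `u(α_j)` are nonnegative combinations of simple roots, hence
so is `w(α_i)`. If instead `ℓ(w s_i) < ℓ(w)`, then `w(α_i) = -(w s_i)(α_i)` is negative. Positive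
independence of the simple roots makes the two cones meet only in `0`, and no root is `0`.
-/

theorem eq_zero_of_mem_closure_range_of_neg_mem {ι X : Type*} [Fintype ι] [AddCommGroup X]
    {α : ι → X} (hα : ∀ lam : ι → ℕ, ∑ i, (lam i : ℤ) • α i = 0 → ∀ i, lam i = 0) {x : X}
    (hx : x ∈ AddSubmonoid.closure (Set.range α))
    (hnx : -x ∈ AddSubmonoid.closure (Set.range α)) : x = 0 := by
  obtain ⟨a, rfl⟩ := AddSubmonoid.mem_closure_range_iff_of_fintype.1 hx
  obtain ⟨b, hb⟩ := AddSubmonoid.mem_closure_range_iff_of_fintype.1 hnx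
  have hab := hα (a + b) (by
    simp only [Pi.add_apply, natCast_zsmul, add_smul, Finset.sum_add_distrib, ← hb,
      add_neg_cancel])
  simp [fun i => (Nat.add_eq_zero_iff.1 (hab i)).1]

theorem Set.eq_inter_union_neg_image_inter {X : Type*} [InvolutiveNeg X] {R C : Set X}
    (hR : ∀ x ∈ R, -x ∈ R) (hRC : ∀ x ∈ R, x ∈ C ∨ -x ∈ C) :
    R = R ∩ C ∪ Neg.neg '' (R ∩ C) := by
  ext x
  constructor
  · intro hx
    rcases hRC x hx with h | h
    · exact .inl ⟨hx, h⟩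
    · exact .inr ⟨-x, ⟨hR x hx, h⟩, neg_neg x⟩
  · rintro (⟨hx, -⟩ | ⟨y, ⟨hy, -⟩, rfl⟩)
    exacts [hx, hR y hy]

theorem Set.inter_inter_neg_image_inter_eq_empty {X : Type*} [Zero X] [InvolutiveNeg X]
    {R C : Set X} (h0 : 0 ∉ R) (hC : ∀ x ∈ C, -x ∈ C → x = 0) :
    R ∩ C ∩ Neg.neg '' (R ∩ C) = ∅ := by
  rw [Set.eq_empty_iff_forall_notMem]
  rintro x ⟨⟨hxR, hxC⟩, y, ⟨-, hyC⟩, rfl⟩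
  exact h0 (hC _ hxC (by rwa [neg_neg]) ▸ hxR)

-- `dihedralCoeffs (-a_ij) (-a_ji) k` holds the coefficients of `α_i`, `α_j` in `(⋯ s_i s_j)(α_i)`,
-- the alternating product of `k` simple reflections (`rho_wordProd_alternatingWord_apply`).
def dihedralCoeffs (p q : ℤ) : ℕ → ℤ × ℤ
  | 0 => (1, 0)
  | k + 1 =>
    let c := dihedralCoeffs p q k
    if Even k then (c.1, q * c.1 - c.2) else (p * c.2 - c.1, c.2)

theorem dihedralCoeffs_nonneg_of_four_le {p q : ℤ} (hp : 0 ≤ p) (hq : 0 ≤ q) (h4 : 4 ≤ p * q)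
    (k : ℕ) :
    0 ≤ (dihedralCoeffs p q k).1 ∧ 0 ≤ (dihedralCoeffs p q k).2 ∧
      (Even k → 2 * (dihedralCoeffs p q k).2 ≤ q * (dihedralCoeffs p q k).1) ∧
      (¬Even k → 2 * (dihedralCoeffs p q k).1 ≤ p * (dihedralCoeffs p q k).2) := by
  induction k with
  | zero => simpa [dihedralCoeffs] using hq
  | succ k ih =>
    obtain ⟨hx, hy, heven, hodd⟩ := ih
    by_cases hk : Even k
    · have h := heven hk
      simp only [dihedralCoeffs, hk, ↓reduceIte, Nat.even_add_one, not_true_eq_false,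
        not_false_eq_true, false_imp_iff, true_imp_iff, true_and]
      refine ⟨hx, by linarith, ?_⟩
      nlinarith [mul_nonneg hp (sub_nonneg.2 h), mul_nonneg (sub_nonneg.2 h4) hx]
    · have h := hodd hk
      simp only [dihedralCoeffs, hk, ↓reduceIte, Nat.even_add_one, not_true_eq_false,
        not_false_eq_true, false_imp_iff, true_imp_iff, and_true]
      refine ⟨by linarith, hy, ?_⟩
      nlinarith [mul_nonneg hq (sub_nonneg.2 h), mul_nonneg (sub_nonneg.2 h4) hy]

theorem dihedralCoeffs_nonneg {S : Type*} [DecidableEq S] (A : GCM S) {i j : S} (hij : i ≠ j)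
    {k : ℕ} (hk : A.m i j = 0 ∨ k < A.m i j) :
    0 ≤ (dihedralCoeffs (-A.a i j) (-A.a j i) k).1 ∧
      0 ≤ (dihedralCoeffs (-A.a i j) (-A.a j i) k).2 := by
  have hp : 0 ≤ -A.a i j := neg_nonneg.2 (A.off_diagonal_nonpos i j hij)
  have hq : 0 ≤ -A.a j i := neg_nonneg.2 (A.off_diagonal_nonpos j i hij.symm)
  have hzero : -A.a i j = 0 ↔ -A.a j i = 0 := by
    simpa only [neg_eq_zero] using ⟨A.zero_iff i j, A.zero_iff j i⟩
  rw [GCM.m, if_neg hij, ← neg_mul_neg] at hk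
  generalize -A.a i j = p at *
  generalize -A.a j i = q at *
  by_cases h4 : 4 ≤ p * q
  · exact (dihedralCoeffs_nonneg_of_four_le hp hq h4 k).imp_right And.left
  obtain ⟨hp3, hq3⟩ : p ≤ 3 ∧ q ≤ 3 := by
    rcases hq.eq_or_lt with rfl | hq0
    · simp_all
    · have hp0 : 0 < p := hp.lt_of_ne fun h => hq0.ne' (hzero.1 h.symm)
      constructor <;> nlinarith
  have hk6 : k < 6 := by
    have hpq := mul_nonneg hp hq
    generalize p * q = r at hk hpq h4
    rcases hk with hk | hk <;> split_ifs at hk <;> omega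
  revert hk
  revert k
  interval_cases p <;> interval_cases q <;> decide

namespace CoxeterSystem

variable {B W : Type*} [Group W] {M : CoxeterMatrix B} (cs : CoxeterSystem M W)

local prefix:100 "s " => cs.simple
local prefix:100 "π " => cs.wordProd
local prefix:100 "ℓ " => cs.length

theorem length_wordProd_alternatingWord_le (i i' : B) (k : ℕ) :
    ℓ (π (alternatingWord i i' k)) ≤ k := by
  simpa using cs.length_wordProd_le (alternatingWord i i' k)

theorem length_mul_wordProd_alternatingWord_le (u : W) (i i' : B) (k : ℕ) :
    ℓ (u * π (alternatingWord i i' k)) ≤ ℓ u + k :=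
  (cs.length_mul_le u _).trans <|
    Nat.add_le_add_left (cs.length_wordProd_alternatingWord_le i i' k) _

theorem exists_wordProd_alternatingWord_mul_simple (i i' : B) {c : B} (hc : c = i ∨ c = i')
    (k : ℕ) : ∃ k' ≤ k + 1, π (alternatingWord i i' k) * s c = π (alternatingWord i i' k') ∨
      π (alternatingWord i i' k) * s c = π (alternatingWord i' i k') := by
  rcases hc with rfl | rfl
  · exact ⟨k + 1, le_rfl, Or.inr (by rw [alternatingWord_succ, wordProd_concat])⟩
  · cases k with
    | zero => exact ⟨1, le_rfl, Or.inl (by simp [alternatingWord])⟩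
    | succ k =>
      refine ⟨k, by omega, Or.inr ?_⟩
      rw [alternatingWord_succ, wordProd_concat, simple_mul_simple_cancel_right]

theorem exists_wordProd_eq_wordProd_alternatingWord (i i' : B) (ω : List B)
    (hω : ∀ c ∈ ω, c = i ∨ c = i') : ∃ k ≤ ω.length,
      π ω = π (alternatingWord i i' k) ∨ π ω = π (alternatingWord i' i k) := by
  induction ω using List.reverseRecOn with
  | nil => exact ⟨0, le_rfl, Or.inl rfl⟩
  | append_singleton ω c ih =>
    have hc : c = i ∨ c = i' := hω c (by simp)
    obtain ⟨k, hk, hπ⟩ := ih fun d hd => hω d (by simp [hd])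
    rw [wordProd_append, wordProd_singleton, List.length_append, List.length_singleton]
    rcases hπ with hπ | hπ
    · obtain ⟨k', hk', h⟩ := cs.exists_wordProd_alternatingWord_mul_simple i i' hc k
      exact ⟨k', by omega, hπ ▸ h⟩
    · obtain ⟨k', hk', h⟩ := cs.exists_wordProd_alternatingWord_mul_simple i' i hc.symm k
      exact ⟨k', by omega, hπ ▸ h.symm⟩

/-- A weak form of the parabolic decomposition `w = w^J w_J` for `J = {i, i'}`: right descents
of `u` in `J` are moved into the word until none is left. -/
theorem exists_mul_wordProd_eq_mul_wordProd_alternatingWord (i i' : B) (u : W) (ω : List B)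
    (hω : ∀ c ∈ ω, c = i ∨ c = i') (hlen : ℓ (u * π ω) = ℓ u + ω.length) :
    ∃ v k, (u * π ω = v * π (alternatingWord i i' k) ∨
        u * π ω = v * π (alternatingWord i' i k)) ∧
      ℓ v + k = ℓ (u * π ω) ∧ ¬cs.IsRightDescent v i ∧ ¬cs.IsRightDescent v i' := by
  induction hn : ℓ u using Nat.strong_induction_on generalizing u ω with
  | _ n ih =>
  by_cases hdesc : ∃ c, (c = i ∨ c = i') ∧ cs.IsRightDescent u c
  · obtain ⟨c, hc, hu⟩ := hdesc
    have hmul : u * s c * π (c :: ω) = u * π ω := by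
      rw [wordProd_cons, mul_assoc, simple_mul_simple_cancel_left]
    rw [isRightDescent_iff] at hu
    have := ih _ (by omega) (u * s c) (c :: ω) (List.forall_mem_cons.2 ⟨hc, hω⟩)
      (by rw [hmul, List.length_cons]; omega) rfl
    rwa [hmul] at this
  · push Not at hdesc
    obtain ⟨k, hk, hπ⟩ := cs.exists_wordProd_eq_wordProd_alternatingWord i i' ω hω
    have hle : ℓ (u * π ω) ≤ ℓ u + k := by
      rcases hπ with hπ | hπ <;> rw [hπ] <;> exact cs.length_mul_wordProd_alternatingWord_le u _ _ k
    refine ⟨u, k, ?_, by omega, hdesc i (.inl rfl), hdesc i' (.inr rfl)⟩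
    rcases hπ with hπ | hπ <;> rw [hπ] <;> simp

theorem isRightDescent_mul_wordProd_alternatingWord {i i' : B} {u : W} {k : ℕ} (hk : 0 < k)
    (hlen : ℓ (u * π (alternatingWord i' i k)) = ℓ u + k) :
    cs.IsRightDescent (u * π (alternatingWord i' i k)) i := by
  obtain ⟨k, rfl⟩ := Nat.exists_eq_add_one_of_ne_zero hk.ne'
  rw [alternatingWord_succ, wordProd_concat, ← mul_assoc] at hlen ⊢
  have := cs.length_mul_wordProd_alternatingWord_le u i i' k
  rw [IsRightDescent, simple_mul_simple_cancel_right]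
  omega

theorem lt_of_not_isRightDescent_mul_wordProd_alternatingWord {i i' : B} {u : W} {k : ℕ}
    (hM : M i i' ≠ 0) (hlen : ℓ (u * π (alternatingWord i i' k)) = ℓ u + k)
    (hdesc : ¬cs.IsRightDescent (u * π (alternatingWord i i' k)) i) : k < M i i' := by
  rw [not_isRightDescent_iff, hlen, mul_assoc, ← wordProd_concat, ← alternatingWord_succ]
    at hdesc
  have hred : cs.IsReduced (alternatingWord i' i (k + 1)) := by
    have := cs.length_mul_le u (π (alternatingWord i' i (k + 1)))
    have := cs.length_wordProd_alternatingWord_le i' i (k + 1)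
    rw [IsReduced, length_alternatingWord]
    omega
  by_contra! h
  rw [M.symmetric] at hM h
  exact cs.not_isReduced_alternatingWord i' i hM (by omega) hred

theorem exists_eq_mul_wordProd_alternatingWord {w : W} {i j : B}
    (hi : ¬cs.IsRightDescent w i) (hj : cs.IsRightDescent w j) :
    ∃ u k, w = u * π (alternatingWord i j k) ∧ ℓ u < ℓ w ∧ (M i j = 0 ∨ k < M i j) ∧
      ¬cs.IsRightDescent u i ∧ ¬cs.IsRightDescent u j := by
  obtain ⟨u, k, hwu, hlen, hui, huj⟩ :=
    cs.exists_mul_wordProd_eq_mul_wordProd_alternatingWord i j w [] (by simp) (by simp)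
  rw [wordProd_nil, mul_one] at hwu hlen
  have hk : 0 < k := by
    refine Nat.pos_of_ne_zero fun hk => huj ?_
    subst hk
    obtain rfl : w = u := by simpa [alternatingWord] using hwu
    exact hj
  obtain rfl : w = u * π (alternatingWord i j k) := by
    refine hwu.resolve_right fun h => ?_
    rw [h] at hi hlen
    exact hi (cs.isRightDescent_mul_wordProd_alternatingWord hk hlen.symm)
  refine ⟨u, k, rfl, by omega, ?_, hui, huj⟩
  exact (em (M i j = 0)).imp_right fun hM =>
    cs.lt_of_not_isRightDescent_mul_wordProd_alternatingWord hM hlen.symm hi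

end CoxeterSystem

section Realisation

variable {S W X : Type*} [Group W] {M : CoxeterMatrix S} (cs : CoxeterSystem M W)
  [AddCommGroup X] (A : GCM S) (α : S → X) (ρ : W →* Module.End ℤ X)

open CoxeterSystem

theorem rho_simple_apply_self (hρα : ∀ i j, ρ (cs.simple i) (α j) = α j - A.a i j • α i)
    (i : S) : ρ (cs.simple i) (α i) = -α i := by
  rw [hρα, A.diagonal]
  module

theorem rho_mul_simple_apply_self (hρα : ∀ i j, ρ (cs.simple i) (α j) = α j - A.a i j • α i)
    (w : W) (i : S) : ρ (w * cs.simple i) (α i) = -ρ w (α i) := by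
  rw [map_mul, Module.End.mul_apply, rho_simple_apply_self cs A α ρ hρα, map_neg]

theorem rho_wordProd_alternatingWord_apply
    (hρα : ∀ i j, ρ (cs.simple i) (α j) = α j - A.a i j • α i) (i j : S) (k : ℕ) :
    ρ (cs.wordProd (alternatingWord i j k)) (α i) =
      (dihedralCoeffs (-A.a i j) (-A.a j i) k).1 • α i +
        (dihedralCoeffs (-A.a i j) (-A.a j i) k).2 • α j := by
  induction k with
  | zero => simp [alternatingWord, dihedralCoeffs]
  | succ k ih =>
    rw [alternatingWord_succ', cs.wordProd_cons, map_mul, Module.End.mul_apply, ih]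
    by_cases hk : Even k <;>
      simp only [dihedralCoeffs, hk, ↓reduceIte, map_add, map_zsmul, hρα, A.diagonal] <;>
      module

theorem exists_rho_wordProd_alternatingWord_apply_eq [DecidableEq S]
    (hρα : ∀ i j, ρ (cs.simple i) (α j) = α j - A.a i j • α i) {i j : S} (hij : i ≠ j) {k : ℕ}
    (hk : A.m i j = 0 ∨ k < A.m i j) :
    ∃ a b : ℕ, ρ (cs.wordProd (alternatingWord i j k)) (α i) = a • α i + b • α j := by
  obtain ⟨ha, hb⟩ := dihedralCoeffs_nonneg A hij hk
  rw [rho_wordProd_alternatingWord_apply cs A α ρ hρα]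
  generalize dihedralCoeffs (-A.a i j) (-A.a j i) k = c at ha hb
  obtain ⟨a, b⟩ := c
  lift a to ℕ using ha
  lift b to ℕ using hb
  exact ⟨a, b, by rw [natCast_zsmul, natCast_zsmul]⟩

theorem rho_apply_mem_closure_of_not_isRightDescent [DecidableEq S]
    (hM : ∀ i j, M i j = A.m i j) (hρα : ∀ i j, ρ (cs.simple i) (α j) = α j - A.a i j • α i)
    (w : W) (i : S) (hw : ¬cs.IsRightDescent w i) :
    ρ w (α i) ∈ AddSubmonoid.closure (Set.range α) := by
  induction hn : cs.length w using Nat.strong_induction_on generalizing w i with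
  | _ n ih =>
  by_cases h1 : w = 1
  · subst h1
    simpa using AddSubmonoid.subset_closure (Set.mem_range_self i)
  obtain ⟨j, hj⟩ := cs.exists_rightDescent_of_ne_one h1
  have hij : i ≠ j := by
    rintro rfl
    exact hw hj
  obtain ⟨u, k, rfl, hlt, hk, hui, huj⟩ := cs.exists_eq_mul_wordProd_alternatingWord hw hj
  obtain ⟨a, b, hab⟩ :=
    exists_rho_wordProd_alternatingWord_apply_eq cs A α ρ hρα hij (hM i j ▸ hk)
  rw [map_mul, Module.End.mul_apply, hab, map_add, map_nsmul, map_nsmul]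
  exact add_mem (nsmul_mem (ih _ (hn ▸ hlt) u i hui rfl) a)
    (nsmul_mem (ih _ (hn ▸ hlt) u j huj rfl) b)

theorem rho_apply_mem_closure_or_neg_mem [DecidableEq S] (hM : ∀ i j, M i j = A.m i j)
    (hρα : ∀ i j, ρ (cs.simple i) (α j) = α j - A.a i j • α i) (w : W) (i : S) :
    ρ w (α i) ∈ AddSubmonoid.closure (Set.range α) ∨
      -ρ w (α i) ∈ AddSubmonoid.closure (Set.range α) := by
  by_cases hw : cs.IsRightDescent w i
  · right
    rw [← rho_mul_simple_apply_self cs A α ρ hρα]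
    exact rho_apply_mem_closure_of_not_isRightDescent cs A α ρ hM hρα _ i
      (cs.isRightDescent_iff_not_isRightDescent_mul.1 hw)
  · exact .inl (rho_apply_mem_closure_of_not_isRightDescent cs A α ρ hM hρα w i hw)

end Realisation

theorem roots_partition_pos_neg_general
    {S : Type*} [DecidableEq S] [Fintype S] (A : GCM S)
    {W : Type*} [Group W] {M : CoxeterMatrix S}
    (cs : CoxeterSystem M W) (hM : ∀ s t, M s t = A.m s t)
    {X Xd : Type*}
    [AddCommGroup X] [Module ℤ X]
    [AddCommGroup Xd] [Module ℤ Xd]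
    (pair : Xd →ₗ[ℤ] X →ₗ[ℤ] ℤ)
    (α : S → X) (coroot : S → Xd)
    (hpairing : ∀ s t, pair (coroot s) (α t) = A.a s t)
    (hposindep : ∀ lam : S → ℕ, (∑ s : S, (lam s : ℤ) • α s) = 0 → ∀ s, lam s = 0)
    (ρ : W →* Module.End ℤ X)
    (hρ : ∀ (s : S) (x : X), ρ (cs.simple s) x = x - pair (coroot s) x • α s) :
    rootSet ρ α = posRootSet ρ α ∪ (Neg.neg '' posRootSet ρ α) ∧
    posRootSet ρ α ∩ (Neg.neg '' posRootSet ρ α) = ∅ := by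
  -- `ℤ`-module structures are unique: pass to the canonical one, for which the lemmas are stated.
  obtain rfl : ‹Module ℤ X› = AddCommGroup.toIntModule X := Subsingleton.elim _ _
  have hρα : ∀ i j, ρ (cs.simple i) (α j) = α j - A.a i j • α i := fun i j => by
    rw [hρ, hpairing]
  have hpos : {β | ∃ c : S → ℕ, β = ∑ s, (c s : ℤ) • α s} =
      (AddSubmonoid.closure (Set.range α) : Set X) := by
    ext β
    simp [AddSubmonoid.mem_closure_range_iff_of_fintype, natCast_zsmul]
  rw [posRootSet, hpos]
  refine ⟨Set.eq_inter_union_neg_image_inter ?_ ?_, Set.inter_inter_neg_image_inter_eq_empty ?_ ?_⟩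
  · rintro _ ⟨w, i, rfl⟩
    exact ⟨w * cs.simple i, i, (rho_mul_simple_apply_self cs A α ρ hρα w i).symm⟩
  · rintro _ ⟨w, i, rfl⟩
    exact rho_apply_mem_closure_or_neg_mem cs A α ρ hM hρα w i
  · rintro ⟨w, i, h⟩
    have hαi : α i = 0 :=
      ((Module.End.isUnit_iff _).1 ((Group.isUnit w).map ρ)).1 (by rw [← h, map_zero])
    simpa [hαi, A.diagonal] using hpairing i i
  · exact fun x hx hnx => eq_zero_of_mem_closure_range_of_neg_mem hposindep hx hnx

/-- **Partition into positive and negative roots (STATEMENT 7).**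
Let `A` be a generalised Cartan matrix with a realisation over `ℤ` whose simple roots are
positively independent.  Then the set of roots is partitioned into positive and negative
roots: `Φ = Φ⁺ ⊔ (−Φ⁺)`, where `Φ⁺ = Φ ∩ Σ_{s∈S} ℤ≥0 • α_s`. -/
theorem roots_partition_pos_neg
    {S : Type*} [DecidableEq S] [Fintype S] (A : GCM S)
    {W : Type*} [Group W] {M : CoxeterMatrix S}
    (cs : CoxeterSystem M W) (hM : ∀ s t, M s t = A.m s t)
    {X Xd : Type*}
    [AddCommGroup X] [Module ℤ X] [Module.Free ℤ X] [Module.Finite ℤ X]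
    [AddCommGroup Xd] [Module ℤ Xd] [Module.Free ℤ Xd] [Module.Finite ℤ Xd]
    (pair : Xd →ₗ[ℤ] X →ₗ[ℤ] ℤ)
    (hperf : Function.Bijective pair ∧ Function.Bijective pair.flip)
    (α : S → X) (coroot : S → Xd)
    (hpairing : ∀ s t, pair (coroot s) (α t) = A.a s t)
    (hposindep : ∀ lam : S → ℕ, (∑ s : S, (lam s : ℤ) • α s) = 0 → ∀ s, lam s = 0)
    (ρ : W →* Module.End ℤ X)
    (hρ : ∀ (s : S) (x : X), ρ (cs.simple s) x = x - pair (coroot s) x • α s) :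
    rootSet ρ α = posRootSet ρ α ∪ (Neg.neg '' posRootSet ρ α) ∧
    posRootSet ρ α ∩ (Neg.neg '' posRootSet ρ α) = ∅ :=
  roots_partition_pos_neg_general A cs hM pair α coroot hpairing hposindep ρ hρ
end

section
/- Let X be a finite-rank free ℤ-module and let (α_s)_{s∈S} be a finite family of elements of X. Then the family is positively independent (whenever Σ_{s∈S} λ_s α_s = 0 with all λ_s ∈ ℤ_{≥0}, then all λ_s = 0) if and only if there exists a ℤ-linear functional f : X → ℤ with f(α_s) > 0 for all s ∈ S. -/
/-!
Over an ordered field this is Gordan's alternative, proved by induction on the family. If `f` is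
positive on all vectors but `v₀` and `f v₀ ≤ 0`, the other vectors stay positively independent
modulo `v₀`; a large multiple of a functional positive on them there, lifted to `V`, plus a
functional equal to `1` at `v₀`, is then positive on the whole family. Over `ℤ` one passes to `ℚ`
through a basis of `X` and clears denominators in both directions.
-/

open Module

def PositivelyIndependent (R : Type*) {S M : Type*} [Fintype S] [Semiring R] [PartialOrder R]
    [AddCommMonoid M] [Module R M] (v : S → M) : Prop :=
  ∀ μ : S → R, 0 ≤ μ → ∑ s, μ s • v s = 0 → μ = 0

lemma eq_zero_of_nonneg_of_sum_mul_nonpos {R S : Type*} [Fintype S] [Semiring R] [PartialOrder R]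
    [IsStrictOrderedRing R] {μ c : S → R} (hμ : 0 ≤ μ) (hc : ∀ s, 0 < c s)
    (h : ∑ s, μ s * c s ≤ 0) : μ = 0 := by
  have hterm : ∀ s, 0 ≤ μ s * c s := fun s => mul_nonneg (hμ s) (hc s).le
  have hzero := (Finset.sum_eq_zero_iff_of_nonneg fun s _ => hterm s).1
    (h.antisymm (Finset.sum_nonneg fun s _ => hterm s))
  funext s
  by_contra hne
  exact (mul_pos ((hμ s).lt_of_ne' hne) (hc s)).ne' (hzero s (Finset.mem_univ s))

namespace PositivelyIndependent

variable {R S M N : Type*} [Fintype S] [Semiring R] [PartialOrder R] [AddCommMonoid M]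
  [Module R M] [AddCommMonoid N] [Module R N]

lemma of_forall_pos [IsStrictOrderedRing R] {v : S → M} (f : M →ₗ[R] R)
    (hf : ∀ s, 0 < f (v s)) : PositivelyIndependent R v := fun μ hμ hsum =>
  eq_zero_of_nonneg_of_sum_mul_nonpos hμ hf (by simpa using (congrArg f hsum).le)

lemma map {v : S → M} (h : PositivelyIndependent R v) (e : M →ₗ[R] N)
    (he : Function.Injective e) : PositivelyIndependent R (e ∘ v) := fun μ hμ hsum =>
  h μ hμ (he (by simpa using hsum))

lemma comp_equiv {T : Type*} [Fintype T] {v : T → M} (h : PositivelyIndependent R v)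
    (e : S ≃ T) : PositivelyIndependent R (v ∘ e) := by
  intro μ hμ hsum
  have := h (μ ∘ e.symm) (fun t => hμ _)
    (by rw [← hsum]; exact (Fintype.sum_equiv e _ _ fun s => by simp).symm)
  funext s
  simpa using congrFun this (e s)

lemma option_eq_zero {α : Type*} [Fintype α] {v : Option α → M}
    (h : PositivelyIndependent R v) {c : R} {μ : α → R} (hc : 0 ≤ c) (hμ : 0 ≤ μ)
    (hsum : c • v none + ∑ a, μ a • v (some a) = 0) : c = 0 ∧ μ = 0 := by
  have := h (fun o => o.elim c μ) (by rintro (_ | a); exacts [hc, hμ a])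
    (by simpa [Fintype.sum_option] using hsum)
  exact ⟨congrFun this none, funext fun a => congrFun this (some a)⟩

end PositivelyIndependent

section LinearOrderedField

variable {K V : Type*} [Field K] [LinearOrder K] [IsStrictOrderedRing K] [AddCommGroup V]
  [Module K V]

lemma exists_forall_pos_mul_add {ι : Type*} [Finite ι] {c : ι → K} (hc : ∀ i, 0 < c i)
    (d : ι → K) : ∃ M, ∀ i, 0 < M * c i + d i :=
  (Filter.eventually_all.2 fun i => (Filter.eventually_gt_atTop (-d i / c i)).mono
    fun M hM => by linarith [(div_lt_iff₀ (hc i)).1 hM]).exists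

lemma exists_dual_pos_of_quotient_span_singleton {α : Type*} [Finite α] {v₀ : V}
    (hv₀ : v₀ ≠ 0) {u : α → V} (g : Dual K (V ⧸ K ∙ v₀))
    (hg : ∀ a, 0 < g ((K ∙ v₀).mkQ (u a))) :
    ∃ f : Dual K V, 0 < f v₀ ∧ ∀ a, 0 < f (u a) := by
  obtain ⟨φ, hφ⟩ := Projective.exists_dual_eq_one K hv₀
  obtain ⟨M, hM⟩ := exists_forall_pos_mul_add hg fun a => φ (u a)
  refine ⟨M • (g ∘ₗ (K ∙ v₀).mkQ) + φ, ?_, fun a => by simpa using hM a⟩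
  have hmk : (K ∙ v₀).mkQ v₀ = 0 :=
    (Submodule.Quotient.mk_eq_zero _).2 (Submodule.mem_span_singleton_self v₀)
  simp [hφ, hmk]

namespace PositivelyIndependent

lemma quotient_span_singleton {α : Type*} [Fintype α] {v : Option α → V}
    (h : PositivelyIndependent K v) {f : Dual K V} (hf : ∀ a, 0 < f (v (some a)))
    (hf₀ : f (v none) ≤ 0) :
    PositivelyIndependent K fun a => (K ∙ v none).mkQ (v (some a)) := by
  intro μ hμ hsum
  -- For `c ≤ 0` this is a positive dependence of `v`; for `c > 0`, applying `f` to it bounds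
  -- `∑ a, μ a * f (v (some a))` by `0`.
  obtain ⟨c, hc⟩ : ∃ c : K, c • v none = ∑ a, μ a • v (some a) := by
    rw [← Submodule.mem_span_singleton, ← Submodule.Quotient.mk_eq_zero,
      ← Submodule.mkQ_apply, map_sum]
    simpa only [map_smul] using hsum
  rcases le_or_gt c 0 with hc₀ | hc₀
  · exact (h.option_eq_zero (neg_nonneg.2 hc₀) hμ (by rw [← hc, neg_smul, neg_add_cancel])).2
  · refine eq_zero_of_nonneg_of_sum_mul_nonpos hμ hf ?_
    have hfc := congrArg f hc
    simp only [map_smul, map_sum, smul_eq_mul] at hfc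
    rw [← hfc]
    exact mul_nonpos_of_nonneg_of_nonpos hc₀.le hf₀

theorem exists_dual_forall_pos {S : Type*} [Fintype S] {v : S → V}
    (h : PositivelyIndependent K v) : ∃ f : Dual K V, ∀ s, 0 < f (v s) := by
  refine Fintype.induction_empty_option (P := fun S _ => ∀ (W : Type _) [AddCommGroup W]
    [Module K W] (w : S → W), PositivelyIndependent K w → ∃ f : Dual K W, ∀ s, 0 < f (w s))
    ?_ ?_ ?_ S V v h
  · intro α β _ e ih W _ _ w h
    let := Fintype.ofEquiv β e.symm
    obtain ⟨f, hf⟩ := ih W (w ∘ e) (h.comp_equiv e)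
    exact ⟨f, fun b => by simpa using hf (e.symm b)⟩
  · exact fun W _ _ w _ => ⟨0, fun s => s.elim⟩
  · intro α _ ih W _ _ w h
    obtain ⟨f, hf⟩ := ih W (w ∘ some) fun μ hμ hsum =>
      (h.option_eq_zero le_rfl hμ (by simpa using hsum)).2
    by_cases hf₀ : 0 < f (w none)
    · exact ⟨f, Option.forall.2 ⟨hf₀, hf⟩⟩
    have hw₀ : w none ≠ 0 := fun hw₀ =>
      one_ne_zero (h.option_eq_zero zero_le_one le_rfl (by simp [hw₀])).1
    obtain ⟨g, hg⟩ := ih _ _ (h.quotient_span_singleton hf (not_lt.1 hf₀))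
    obtain ⟨f', hf'₀, hf'⟩ := exists_dual_pos_of_quotient_span_singleton hw₀ g hg
    exact ⟨f', Option.forall.2 ⟨hf'₀, hf'⟩⟩

end PositivelyIndependent

end LinearOrderedField

lemma Rat.exists_pos_nat_mul_eq_intCast {ι : Type*} [Fintype ι] (q : ι → ℚ) :
    ∃ (D : ℕ) (z : ι → ℤ), 0 < D ∧ ∀ i, (z i : ℚ) = D * q i := by
  refine ⟨∏ i, (q i).den, fun i => ((∏ j, (q j).den) / (q i).den : ℕ) * (q i).num,
    Finset.prod_pos fun i _ => (q i).pos, fun i => ?_⟩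
  obtain ⟨k, hk⟩ := Finset.dvd_prod_of_mem (fun j => (q j).den) (Finset.mem_univ i)
  dsimp only
  rw [hk, Nat.mul_div_cancel_left _ (q i).pos]
  push_cast
  rw [mul_comm ((q i).den : ℚ), mul_assoc, Rat.den_mul_eq_num]

lemma PositivelyIndependent.intCast {S ι : Type*} [Fintype S] {v : S → ι → ℤ}
    (h : PositivelyIndependent ℤ v) : PositivelyIndependent ℚ fun s i => (v s i : ℚ) := by
  intro μ hμ hsum
  obtain ⟨D, z, hD, hz⟩ := Rat.exists_pos_nat_mul_eq_intCast μ
  have hz₀ : 0 ≤ z := fun s => by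
    have : (0 : ℚ) ≤ z s := by rw [hz s]; exact mul_nonneg D.cast_nonneg (hμ s)
    exact_mod_cast this
  have hzsum : ∑ s, z s • v s = 0 := by
    funext i
    have hi := congrFun hsum i
    simp only [Finset.sum_apply, Pi.smul_apply, smul_eq_mul, Pi.zero_apply] at hi ⊢
    have : ((∑ s, z s * v s i : ℤ) : ℚ) = 0 := by
      push_cast
      simp only [hz, mul_assoc, ← Finset.mul_sum, hi, mul_zero]
    exact_mod_cast this
  funext s
  have hs := hz s
  rw [congrFun (h z hz₀ hzsum) s] at hs
  simpa [hD.ne'] using hs.symm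

lemma exists_int_dual_forall_pos {S ι : Type*} [Fintype ι] {v : S → ι → ℤ}
    (g : Dual ℚ (ι → ℚ)) (hg : ∀ s, 0 < g fun i => (v s i : ℚ)) :
    ∃ f : Dual ℤ (ι → ℤ), ∀ s, 0 < f (v s) := by
  classical
  obtain ⟨D, z, hD, hz⟩ :=
    Rat.exists_pos_nat_mul_eq_intCast (LinearEquiv.piRing ℚ ℚ ι ℚ g)
  refine ⟨(LinearEquiv.piRing ℤ ℤ ι ℤ).symm z, fun s => ?_⟩
  have hcast : (((LinearEquiv.piRing ℤ ℤ ι ℤ).symm z (v s) : ℤ) : ℚ) =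
      D * g fun i => (v s i : ℚ) := by
    conv_rhs => rw [← (LinearEquiv.piRing ℚ ℚ ι ℚ).symm_apply_apply g]
    simp only [LinearEquiv.piRing_symm_apply, smul_eq_mul, Finset.mul_sum]
    simp [hz, mul_left_comm]
  exact_mod_cast hcast ▸ mul_pos (Nat.cast_pos.2 hD) (hg s)

lemma positivelyIndependent_int_iff {S X : Type*} [Fintype S] [AddCommGroup X] [Module ℤ X]
    {α : S → X} : PositivelyIndependent ℤ α ↔
      ∀ lam : S → ℕ, ∑ s, (lam s : ℤ) • α s = 0 → ∀ s, lam s = 0 := by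
  -- The `•` on the right is `zsmul`, not the scalar action of the given `Module ℤ X`.
  simp only [natCast_zsmul]
  refine ⟨fun h lam hsum s => ?_, fun h μ hμ hsum => funext fun s => ?_⟩
  · have := h (fun s => lam s) (fun s => by simp)
      (by simpa [Nat.cast_smul_eq_nsmul] using hsum)
    simpa using congrFun this s
  · have hμ' : ∀ s, ((μ s).toNat : ℤ) = μ s := fun s => Int.toNat_of_nonneg (hμ s)
    have := h (fun s => (μ s).toNat) (by simpa [← Nat.cast_smul_eq_nsmul ℤ, hμ'] using hsum) s
    rw [← hμ', this, Nat.cast_zero, Pi.zero_apply]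

/-- **Positive independence via a strictly positive functional.**
Let `X` be a finite-rank free `ℤ`-module and `(α_s)_{s ∈ S}` a finite family of elements of `X`.
The family is positively independent (i.e. whenever `Σ_s λ_s • α_s = 0` with all `λ_s ∈ ℤ≥0`
then all `λ_s = 0`) if and only if there is a `ℤ`-linear functional `f : X → ℤ` with
`f (α_s) > 0` for all `s ∈ S`. -/
theorem positively_independent_iff_exists_positive_functional
    {S : Type*} [Fintype S] {X : Type*} [AddCommGroup X] [Module ℤ X]
    [Module.Free ℤ X] [Module.Finite ℤ X] (α : S → X) :
    (∀ lam : S → ℕ, (∑ s : S, (lam s : ℤ) • α s) = 0 → ∀ s, lam s = 0) ↔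
      ∃ f : X →ₗ[ℤ] ℤ, ∀ s : S, 0 < f (α s) := by
  rw [← positivelyIndependent_int_iff]
  refine ⟨fun h => ?_, fun ⟨f, hf⟩ => .of_forall_pos f hf⟩
  let e := (Module.Free.chooseBasis ℤ X).equivFun
  obtain ⟨g, hg⟩ := (h.map e.toLinearMap e.injective).intCast.exists_dual_forall_pos
  obtain ⟨f, hf⟩ := exists_int_dual_forall_pos g hg
  exact ⟨f ∘ₗ e.toLinearMap, hf⟩
end
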